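/- In a resource category, propagation of a pointed bag through a pairing: for a comonoid morphism h : Δ → Γ, a finite multiset b of pointed morphisms Δ → A, and morphisms f : Γ ⊗ A → B, g : Γ ⊗ A → C, one has ⟨f, g⟩ ∘ ⟨h, Πb⟩ = Σ over splittings b = b1 * b2 of ⟨f ∘ ⟨h, Πb1⟩, g ∘ ⟨h, Πb2⟩⟩, where ⟨f,g⟩ = (f ⊗ g) ∘ δ. -/

import Mathlib

open CategoryTheory MonoidalCategory

universe v u

/-- An additive symmetric monoidal category: each hom-set is a commutative monoid and
composition and tensor preserve the additive structure. -/
class ASMC (C : Type u) [Category.{v} C] [MonoidalCategory C] where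
  homMon : ∀ X Y : C, AddCommMonoid (X ⟶ Y)
  comp_add : ∀ {X Y Z : C} (f : X ⟶ Y) (g h : Y ⟶ Z), f ≫ (g + h) = f ≫ g + f ≫ h
  add_comp : ∀ {X Y Z : C} (f g : X ⟶ Y) (h : Y ⟶ Z), (f + g) ≫ h = f ≫ h + g ≫ h
  comp_zero : ∀ {X Y Z : C} (f : X ⟶ Y), f ≫ (0 : Y ⟶ Z) = 0
  zero_comp : ∀ {X Y Z : C} (g : Y ⟶ Z), (0 : X ⟶ Y) ≫ g = 0
  add_tensorHom : ∀ {X Y Z W : C} (f g : X ⟶ Y) (h : Z ⟶ W),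
    (f + g) ⊗ₘ h = f ⊗ₘ h + g ⊗ₘ h
  tensorHom_add : ∀ {X Y Z W : C} (f : X ⟶ Y) (g h : Z ⟶ W),
    f ⊗ₘ (g + h) = f ⊗ₘ g + f ⊗ₘ h
  zero_tensorHom : ∀ {X Y Z W : C} (h : Z ⟶ W), (0 : X ⟶ Y) ⊗ₘ h = 0
  tensorHom_zero : ∀ {X Y Z W : C} (f : X ⟶ Y), f ⊗ₘ (0 : Z ⟶ W) = 0

attribute [instance] ASMC.homMon

variable (C : Type u) [Category.{v} C] [MonoidalCategory C] [SymmetricCategory C]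

/-- The middle-four interchange `(A ⊗ B) ⊗ (A' ⊗ B') ≅ (A ⊗ A') ⊗ (B ⊗ B')`. -/
def mid (A B A' B' : C) : (A ⊗ B) ⊗ (A' ⊗ B') ⟶ (A ⊗ A') ⊗ (B ⊗ B') :=
  (α_ A B (A' ⊗ B')).hom ≫
    (A ◁ ((α_ B A' B').inv ≫ ((β_ B A').hom ▷ B') ≫ (α_ A' B B').hom)) ≫
    (α_ A A' (B ⊗ B')).inv

variable [ASMC C]

/-- A (commutative) bialgebra structure on every object, compatible with the monoidal
structure. -/
structure BialgStruct where
  δ : ∀ A : C, A ⟶ A ⊗ A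
  ε : ∀ A : C, A ⟶ 𝟙_ C
  μ : ∀ A : C, A ⊗ A ⟶ A
  η : ∀ A : C, 𝟙_ C ⟶ A
  coassoc : ∀ A, δ A ≫ (δ A ▷ A) ≫ (α_ A A A).hom = δ A ≫ (A ◁ δ A)
  counit_l : ∀ A, δ A ≫ (ε A ▷ A) = (λ_ A).inv
  counit_r : ∀ A, δ A ≫ (A ◁ ε A) = (ρ_ A).inv
  cocomm : ∀ A, δ A ≫ (β_ A A).hom = δ A
  assoc : ∀ A, (α_ A A A).hom ≫ (A ◁ μ A) ≫ μ A = (μ A ▷ A) ≫ μ A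
  unit_l : ∀ A, (η A ▷ A) ≫ μ A = (λ_ A).hom
  unit_r : ∀ A, (A ◁ η A) ≫ μ A = (ρ_ A).hom
  comm : ∀ A, (β_ A A).hom ≫ μ A = μ A
  bialg : ∀ A, μ A ≫ δ A = (δ A ⊗ₘ δ A) ≫ mid C A A A A ≫ (μ A ⊗ₘ μ A)
  η_δ : ∀ A, η A ≫ δ A = (λ_ (𝟙_ C)).inv ≫ (η A ⊗ₘ η A)
  μ_ε : ∀ A, μ A ≫ ε A = (ε A ⊗ₘ ε A) ≫ (λ_ (𝟙_ C)).hom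
  η_ε : ∀ A, η A ≫ ε A = 𝟙 (𝟙_ C)
  δ_tensor : ∀ A B, δ (A ⊗ B) = (δ A ⊗ₘ δ B) ≫ mid C A A B B
  ε_tensor : ∀ A B, ε (A ⊗ B) = (ε A ⊗ₘ ε B) ≫ (λ_ (𝟙_ C)).hom
  ε_unit : ε (𝟙_ C) = 𝟙 (𝟙_ C)
  μ_tensor : ∀ A B, μ (A ⊗ B) = mid C A B A B ≫ (μ A ⊗ₘ μ B)
  η_tensor : ∀ A B, η (A ⊗ B) = (λ_ (𝟙_ C)).inv ≫ (η A ⊗ₘ η B)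
  η_unit : η (𝟙_ C) = 𝟙 (𝟙_ C)

/-- A resource category structure: a bialgebra on every object together with pointed
identities satisfying the laws of pointed identities. -/
structure ResourceStruct extends BialgStruct C where
  pid : ∀ A : C, A ⟶ A
  pid_idem : ∀ A, pid A ≫ pid A = pid A
  pid_ε : ∀ A, pid A ≫ ε A = 0
  η_pid : ∀ A, η A ≫ pid A = 0
  pid_δ : ∀ A, pid A ≫ δ A =
    pid A ≫ (ρ_ A).inv ≫ (A ◁ η A) + pid A ≫ (λ_ A).inv ≫ (η A ▷ A)
  μ_pid : ∀ A, μ A ≫ pid A =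
    (A ◁ ε A) ≫ (ρ_ A).hom ≫ pid A + (ε A ▷ A) ≫ (λ_ A).hom ≫ pid A

variable {C}

/-- The convolution product `f * g = μ ∘ (f ⊗ g) ∘ δ`. -/
def conv (R : BialgStruct C) {A B : C} (f g : A ⟶ B) : A ⟶ B :=
  R.δ A ≫ (f ⊗ₘ g) ≫ R.μ B

/-- The convolution unit `1 = η ∘ ε`. -/
def convOne (R : BialgStruct C) (A B : C) : A ⟶ B := R.ε A ≫ R.η B

/-- The product `Π[f₁,…,fₙ] = f₁ * ⋯ * fₙ` of a bag (enumerated as a list) of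
morphisms, with `Π[] = 1`. -/
def prodL (R : BialgStruct C) {A B : C} (l : List (A ⟶ B)) : A ⟶ B :=
  l.foldr (conv R) (convOne R A B)

/-- A morphism is pointed when `id• ∘ f = f`. -/
def IsPointedHom (R : ResourceStruct C) {A B : C} (f : A ⟶ B) : Prop := f ≫ R.pid B = f

/-- The sublist of `l` selected by the positions the 2-partitioning `p` sends to `i`. -/
def selH {A B : C} (l : List (A ⟶ B)) (p : Fin l.length → Fin 2) (i : Fin 2) :
    List (A ⟶ B) :=
  ((List.finRange l.length).filter (fun j => p j = i)).map l.get

/-- The pairing `⟨u, v⟩ = (u ⊗ v) ∘ δ`. -/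
def pairH (R : ResourceStruct C) {D X Y : C} (u : D ⟶ X) (v : D ⟶ Y) : D ⟶ X ⊗ Y :=
  R.δ D ≫ (u ⊗ₘ v)

/-- Comonoid morphisms: `δ ∘ h = (h ⊗ h) ∘ δ` and `ε ∘ h = ε`. -/
def IsComonoidHom (R : ResourceStruct C) {D G : C} (h : D ⟶ G) : Prop :=
  h ≫ R.δ G = R.δ D ≫ (h ⊗ₘ h) ∧ h ≫ R.ε G = R.ε D

/-!
Pointedness makes every member `x` of the bag primitive, `x ≫ δ = ⟨x, 1⟩ + ⟨1, x⟩`, and the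
bialgebra law makes `δ` multiplicative for convolution, so by induction on `b` the coproduct of
`Πb` is the sum over all 2-partitionings of `⟨Πb₁, Πb₂⟩`. On the other side,
`δ_{Γ ⊗ A} = (δ ⊗ δ) ≫ mid` and `h ≫ δ = ⟨h, h⟩`, and coassociativity together with
cocommutativity give the medial law `⟨⟨a, b⟩, ⟨c, d⟩⟩ ≫ mid = ⟨⟨a, c⟩, ⟨b, d⟩⟩`, which
redistributes `h` to both components of every summand.
-/

theorem Fin.sum_pi_succ {M β : Type*} [AddCommMonoid M] [Fintype β] {n : ℕ}
    (F : (Fin (n + 1) → β) → M) : ∑ p, F p = ∑ a, ∑ p, F (Fin.cons a p) := by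
  rw [← (Fin.consEquiv fun _ => β).sum_comp, Fintype.sum_prod_type]
  rfl

theorem selH_cons {C : Type u} [Category.{v} C] {D A : C} (x : D ⟶ A) (b : List (D ⟶ A))
    (i : Fin 2) (p : Fin b.length → Fin 2) (j : Fin 2) :
    selH (x :: b) (Fin.cons i p) j = if i = j then x :: selH b p j else selH b p j := by
  have hfr : List.finRange (x :: b).length = 0 :: (List.finRange b.length).map Fin.succ :=
    List.finRange_succ
  unfold selH
  rw [hfr, List.filter_cons]
  by_cases h : i = j
  · subst h
    simp [List.filter_map, Function.comp_def]
  · simp [h, List.filter_map, Function.comp_def]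

namespace ASMC
variable {C : Type u} [Category.{v} C] [MonoidalCategory C] [ASMC C]

def leftComp (P : C) {Q R : C} (g : Q ⟶ R) : (P ⟶ Q) →+ (P ⟶ R) where
  toFun f := f ≫ g
  map_zero' := zero_comp g
  map_add' f f' := add_comp f f' g

theorem sum_comp {ι : Type*} (s : Finset ι) {P Q R : C} (f : ι → (P ⟶ Q)) (g : Q ⟶ R) :
    (∑ i ∈ s, f i) ≫ g = ∑ i ∈ s, f i ≫ g :=
  map_sum (leftComp P g) f s

end ASMC

section Comonoid
variable {C : Type u} [Category.{v} C] [MonoidalCategory C] [SymmetricCategory C]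

theorem mid_eq_tensorμ (A B A' B' : C) : mid C A B A' B' = tensorμ A B A' B' := by
  simp [mid, tensorμ]

theorem mid_natural {A B A' B' A₂ B₂ A₂' B₂' : C} (f : A ⟶ A₂) (g : B ⟶ B₂) (f' : A' ⟶ A₂')
    (g' : B' ⟶ B₂') :
    ((f ⊗ₘ g) ⊗ₘ (f' ⊗ₘ g')) ≫ mid C A₂ B₂ A₂' B₂' =
      mid C A B A' B' ≫ ((f ⊗ₘ f') ⊗ₘ (g ⊗ₘ g')) := by
  simp only [mid_eq_tensorμ, tensorμ_natural]

variable (R : BialgStruct C)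

theorem BialgStruct.δ_whiskerRight (A : C) :
    R.δ A ≫ (R.δ A ▷ A) = R.δ A ≫ (A ◁ R.δ A) ≫ (α_ A A A).inv := by
  rw [← Category.assoc, Iso.eq_comp_inv, Category.assoc, R.coassoc]

theorem BialgStruct.δ_whiskerLeft_braiding (A : C) :
    R.δ A ≫ (A ◁ R.δ A) ≫ (α_ A A A).inv ≫ ((β_ A A).hom ▷ A) ≫ (α_ A A A).hom =
      R.δ A ≫ (A ◁ R.δ A) := by
  rw [← reassoc_of% (R.δ_whiskerRight A), ← comp_whiskerRight_assoc, R.cocomm, R.coassoc]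

theorem BialgStruct.δ_tensorHom_δ_mid (A : C) :
    R.δ A ≫ (R.δ A ⊗ₘ R.δ A) ≫ mid C A A A A = R.δ A ≫ (R.δ A ⊗ₘ R.δ A) := by
  rw [MonoidalCategory.tensorHom_def]
  unfold mid
  simp only [Category.assoc]
  rw [associator_naturality_right_assoc, reassoc_of% (R.coassoc A),
    ← whiskerLeft_comp_assoc, ← whiskerLeft_comp_assoc]
  simp only [Category.assoc]
  rw [R.δ_whiskerLeft_braiding, whiskerLeft_comp, Category.assoc,
    associator_inv_naturality_right, ← reassoc_of% (R.δ_whiskerRight A)]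

end Comonoid

section Pairing
variable {C : Type u} [Category.{v} C] [MonoidalCategory C] [SymmetricCategory C] [ASMC C]
variable (R : ResourceStruct C)

def pairHAddMonoidHom {D X : C} (u : D ⟶ X) (Y : C) : (D ⟶ Y) →+ (D ⟶ X ⊗ Y) where
  toFun := pairH R u
  map_zero' := by rw [pairH, ASMC.tensorHom_zero, ASMC.comp_zero]
  map_add' v w := by rw [pairH, ASMC.tensorHom_add, ASMC.comp_add]; rfl

theorem pairH_sum_right {ι : Type*} (s : Finset ι) {D X Y : C} (u : D ⟶ X)
    (v : ι → (D ⟶ Y)) : pairH R u (∑ i ∈ s, v i) = ∑ i ∈ s, pairH R u (v i) :=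
  map_sum (pairHAddMonoidHom R u Y) v s

theorem pairH_add_left {D X Y : C} (u u' : D ⟶ X) (v : D ⟶ Y) :
    pairH R (u + u') v = pairH R u v + pairH R u' v := by
  rw [pairH, ASMC.add_tensorHom, ASMC.comp_add]; rfl

theorem pairH_comp_tensorHom {D X Y X' Y' : C} (u : D ⟶ X) (v : D ⟶ Y) (f : X ⟶ X')
    (g : Y ⟶ Y') : pairH R u v ≫ (f ⊗ₘ g) = pairH R (u ≫ f) (v ≫ g) := by
  simp only [pairH, Category.assoc, tensorHom_comp_tensorHom]

theorem pairH_comp_δ {D X Y : C} (u : D ⟶ X) (v : D ⟶ Y) :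
    pairH R u v ≫ R.δ (X ⊗ Y) = pairH R (u ≫ R.δ X) (v ≫ R.δ Y) ≫ mid C X X Y Y := by
  rw [R.δ_tensor, ← Category.assoc, pairH_comp_tensorHom]

theorem pairH_pairH_mid {D X Y Z W : C} (a : D ⟶ X) (b : D ⟶ Y) (c : D ⟶ Z) (d : D ⟶ W) :
    pairH R (pairH R a b) (pairH R c d) ≫ mid C X Y Z W =
      pairH R (pairH R a c) (pairH R b d) := by
  simp only [pairH, ← tensorHom_comp_tensorHom, Category.assoc, mid_natural]
  rw [reassoc_of% (R.δ_tensorHom_δ_mid D)]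

theorem conv_eq_pairH_comp_μ {D A : C} (u v : D ⟶ A) :
    conv R.toBialgStruct u v = pairH R u v ≫ R.μ A := by
  simp only [conv, pairH, Category.assoc]

theorem conv_comp_δ {D A : C} (u v : D ⟶ A) :
    conv R.toBialgStruct u v ≫ R.δ A =
      pairH R (u ≫ R.δ A) (v ≫ R.δ A) ≫ mid C A A A A ≫ (R.μ A ⊗ₘ R.μ A) := by
  rw [conv_eq_pairH_comp_μ, Category.assoc, R.bialg, reassoc_of% (pairH_comp_tensorHom R)]

theorem pairH_pairH_mid_μ {D A : C} (a b c d : D ⟶ A) :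
    pairH R (pairH R a b) (pairH R c d) ≫ mid C A A A A ≫ (R.μ A ⊗ₘ R.μ A) =
      pairH R (conv R.toBialgStruct a c) (conv R.toBialgStruct b d) := by
  rw [reassoc_of% (pairH_pairH_mid R), pairH_comp_tensorHom, ← conv_eq_pairH_comp_μ,
    ← conv_eq_pairH_comp_μ]

theorem pairH_convOne_right {D X A : C} (u : D ⟶ X) :
    pairH R u (convOne R.toBialgStruct D A) = u ≫ (ρ_ X).inv ≫ (X ◁ R.η A) := by
  rw [pairH, convOne, ← Category.id_comp u, ← tensorHom_comp_tensorHom, id_tensorHom,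
    reassoc_of% (R.counit_r D), MonoidalCategory.tensorHom_def,
    rightUnitor_inv_naturality_assoc, Category.id_comp]

theorem pairH_convOne_left {D X A : C} (u : D ⟶ X) :
    pairH R (convOne R.toBialgStruct D A) u = u ≫ (λ_ X).inv ≫ (R.η A ▷ X) := by
  rw [pairH, convOne, ← Category.id_comp u, ← tensorHom_comp_tensorHom, tensorHom_id,
    reassoc_of% (R.counit_l D), tensorHom_def', leftUnitor_inv_naturality_assoc,
    Category.id_comp]

theorem convOne_conv {D A : C} (v : D ⟶ A) :
    conv R.toBialgStruct (convOne R.toBialgStruct D A) v = v := by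
  rw [conv_eq_pairH_comp_μ, pairH_convOne_left]
  simp only [Category.assoc, R.unit_l, Iso.inv_hom_id, Category.comp_id]

theorem convOne_comp_δ {D A : C} :
    convOne R.toBialgStruct D A ≫ R.δ A =
      pairH R (convOne R.toBialgStruct D A) (convOne R.toBialgStruct D A) := by
  rw [pairH_convOne_left, convOne, Category.assoc, R.η_δ, tensorHom_def',
    ← leftUnitor_inv_naturality_assoc]
  simp only [Category.assoc]

theorem IsPointedHom.comp_δ {R : ResourceStruct C} {D A : C} {x : D ⟶ A}
    (hx : IsPointedHom R x) :
    x ≫ R.δ A =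
      pairH R x (convOne R.toBialgStruct D A) + pairH R (convOne R.toBialgStruct D A) x := by
  have hx' : x ≫ R.δ A = x ≫ R.pid A ≫ R.δ A := by rw [← Category.assoc, hx]
  rw [hx', R.pid_δ, ASMC.comp_add, reassoc_of% hx, reassoc_of% hx, pairH_convOne_right,
    pairH_convOne_left]

theorem IsComonoidHom.comp_δ {R : ResourceStruct C} {D G : C} {h : D ⟶ G}
    (hh : IsComonoidHom R h) : h ≫ R.δ G = pairH R h h :=
  hh.1

theorem prodL_cons {D A : C} (x : D ⟶ A) (l : List (D ⟶ A)) :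
    prodL R.toBialgStruct (x :: l) = conv R.toBialgStruct x (prodL R.toBialgStruct l) := rfl

theorem prodL_comp_δ {D A : C} (b : List (D ⟶ A)) (hb : ∀ f ∈ b, IsPointedHom R f) :
    prodL R.toBialgStruct b ≫ R.δ A =
      ∑ p : Fin b.length → Fin 2,
        pairH R (prodL R.toBialgStruct (selH b p 0)) (prodL R.toBialgStruct (selH b p 1)) := by
  induction b with
  | nil =>
    simp only [List.length_nil, Finset.univ_unique, Finset.sum_singleton]
    exact convOne_comp_δ R
  | cons x b ih =>
    rw [List.forall_mem_cons] at hb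
    rw [prodL_cons, conv_comp_δ, hb.1.comp_δ, ih hb.2, pairH_add_left, ASMC.add_comp,
      pairH_sum_right, pairH_sum_right, ASMC.sum_comp, ASMC.sum_comp]
    simp only [pairH_pairH_mid_μ, convOne_conv]
    refine Eq.trans ?_ (Fin.sum_pi_succ (n := b.length) _).symm
    rw [Fin.sum_univ_two]
    simp [selH_cons, prodL_cons]

end Pairing

/-- propagation of a pointed bag through a pairing: for a comonoid
morphism `h : Δ ⟶ Γ`, a bag `b` of pointed morphisms `Δ ⟶ A`, and morphisms
`f : Γ ⊗ A ⟶ B`, `g : Γ ⊗ A ⟶ C'`, one has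
`⟨f, g⟩ ∘ ⟨h, Πb⟩ = Σ_{b ◁ b₁*b₂} ⟨f ∘ ⟨h, Πb₁⟩, g ∘ ⟨h, Πb₂⟩⟩`. -/
theorem pairing_propagation {C : Type u} [Category.{v} C] [MonoidalCategory C]
    [SymmetricCategory C] [ASMC C] (R : ResourceStruct C) {D G A B C' : C}
    (h : D ⟶ G) (hh : IsComonoidHom R h)
    (b : List (D ⟶ A)) (hb : ∀ f ∈ b, IsPointedHom R f)
    (f : G ⊗ A ⟶ B) (g : G ⊗ A ⟶ C') :
    pairH R h (prodL R.toBialgStruct b) ≫ pairH R f g =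
      ∑ p : Fin b.length → Fin 2,
        pairH R (pairH R h (prodL R.toBialgStruct (selH b p 0)) ≫ f)
                (pairH R h (prodL R.toBialgStruct (selH b p 1)) ≫ g) := by
  calc pairH R h (prodL R.toBialgStruct b) ≫ pairH R f g
      = pairH R (h ≫ R.δ G) (prodL R.toBialgStruct b ≫ R.δ A) ≫ mid C G G A A ≫ (f ⊗ₘ g) := by
        rw [← reassoc_of% (pairH_comp_δ R)]; rfl
    _ = ∑ p : Fin b.length → Fin 2,
          pairH R (pairH R h h)
              (pairH R (prodL R.toBialgStruct (selH b p 0)) (prodL R.toBialgStruct (selH b p 1))) ≫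
            mid C G G A A ≫ (f ⊗ₘ g) := by
        rw [hh.comp_δ, prodL_comp_δ R b hb, pairH_sum_right, ASMC.sum_comp]
    _ = _ := by
        simp only [reassoc_of% (pairH_pairH_mid R), pairH_comp_tensorHom]
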